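/- Let w_lin be the linearization of (a rotation of) any binary de Bruijn sequence of order k ≥ 2. Then the size χ of a smallest suffixient set for the terminated string w_lin $ is 2^k + 1. -/

import Mathlib

/-- The Burrows–Wheeler transform of `w`: last characters of all cyclic
rotations of `w`, listed in lexicographic order of the rotations. -/
def bwtL {α : Type*} [LinearOrder α] (w : List α) : List α :=
  (List.insertionSort (· ≤ ·)
    ((List.range w.length).map (fun i => w.rotate i))).filterMap List.getLast?

/-- Number of runs (maximal equal-letter substrings) of a string. -/
def runsCount {α : Type*} [DecidableEq α] (l : List α) : ℕ :=
  (l.destutter (· ≠ ·)).length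

/-- Terminate a string with the sentinel `⊥ = $`, smaller than every symbol. -/
def term {α : Type*} (w : List α) : List (WithBot α) :=
  w.map (fun a => (a : WithBot α)) ++ [⊥]

/-- `y` is a right-extension of `v`: `y = x ++ [a]` occurs in `v` where `x`
is right-maximal (some `x ++ [b]` with `b ≠ a` also occurs in `v`). -/
def RightExt {α : Type*} (v y : List α) : Prop :=
  ∃ x a b, y = x ++ [a] ∧ a ≠ b ∧ (x ++ [a]) <:+: v ∧ (x ++ [b]) <:+: v

/-- `y` is a super-maximal extension of `v`: a right-extension that is not a
proper suffix of any other right-extension. -/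
def SuperMax {α : Type*} (v y : List α) : Prop :=
  RightExt v y ∧ ∀ z, RightExt v z → y <:+ z → z = y

/-- Number of super-maximal extensions of `v`. -/
noncomputable def sre {α : Type*} (v : List α) : ℕ :=
  Set.ncard {y | SuperMax v y}

/-- χ(w): the size of a smallest suffixient set of `w$`, which equals the
number of super-maximal extensions of `w$`. -/
noncomputable def chi {α : Type*} (w : List α) : ℕ :=
  sre (term w)

/-- A de Bruijn sequence of order `k` over a finite alphabet `α`: a cyclic
word of length `(card α)^k` in which every word of length `k` occurs exactly
once as a cyclic length-`k` window. -/
def IsDeBruijn {α : Type*} [Fintype α] (k : ℕ) (C : List α) : Prop :=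
  C.length = Fintype.card α ^ k ∧
  ∀ x : List α, x.length = k → ∃! i, i < C.length ∧ x = (C.rotate i).take k

/-- The linearization of a rotation `U` of a de Bruijn cycle of order `k`:
append the first `k − 1` characters of `U` at the end. -/
def linz {α : Type*} (k : ℕ) (U : List α) : List α :=
  U ++ U.take (k - 1)

/-!
Every word of length `k` occurs exactly once in the linearization `w`. So if a word `x` is
followed in `w$` by two different symbols, then `|x| < k`: otherwise the length-`k` prefix of `x`
would occur twice, either because `x` is followed by two different letters in `w`, or because `x`
is a suffix of `w` (followed by `$`) that also occurs followed by a letter. As every word of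
length at most `k` occurs in `w`, the right-extensions of `w$` are the nonempty words of length at
most `k` and the words `s$` with `s` a suffix of `w` shorter than `k`. The super-maximal ones are
the `2^k` words of length `k` and `s$` for the suffix `s` of length `k - 1`.
-/

open List

variable {α : Type*}

theorem List.infix_iff_exists_prefix_drop {x w : List α} : x <:+: w ↔ ∃ i, x <+: w.drop i := by
  rw [infix_iff_prefix_suffix]
  constructor
  · rintro ⟨t, hxt, htw⟩
    exact ⟨_, suffix_iff_eq_drop.mp htw ▸ hxt⟩
  · rintro ⟨i, hi⟩
    exact ⟨_, hi, drop_suffix i w⟩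

theorem List.ncard_setOf_length_eq [Fintype α] (k : ℕ) :
    {x : List α | x.length = k}.ncard = Fintype.card α ^ k := by
  rw [← Nat.card_coe_set_eq]
  exact (Nat.card_eq_fintype_card (α := List.Vector α k)).trans (card_vector k)

-- Not `rfl`: the coercion in `term` elaborates through the list monad, as `w >>= pure ∘ some`.
theorem term_eq_map_append (w : List α) : term w = w.map WithBot.some ++ [⊥] := by
  simp [term, map_eq_flatMap]

theorem append_singleton_infix_term_iff {w : List α} {x : List (WithBot α)} {a : WithBot α} :
    x ++ [a] <:+: term w ↔
      (∃ (x' : List α) (a' : α), x' ++ [a'] <:+: w ∧ x = x'.map WithBot.some ∧ a = a') ∨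
      (∃ s, s <:+ w ∧ x = s.map WithBot.some) ∧ a = ⊥ := by
  rw [term_eq_map_append, infix_concat_iff,
    suffix_append_inj_of_length_eq (s₁ := [a]) (s₂ := [⊥]) rfl, infix_map_iff, suffix_map_iff,
    singleton_inj, or_comm]
  refine or_congr ⟨?_, ?_⟩ Iff.rfl
  · rintro ⟨l, hl, he⟩
    obtain ⟨x', l₂, rfl, rfl, h₂⟩ := map_eq_append_iff.mp he.symm
    obtain ⟨a', rfl, rfl⟩ := map_eq_singleton_iff.mp h₂
    exact ⟨x', a', hl, rfl, rfl⟩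
  · rintro ⟨x', a', hl, rfl, rfl⟩
    exact ⟨_, hl, by simp⟩

theorem superMax_iff_of_rightExt_length_le {β : Type*} {v : List β} {k : ℕ}
    (hle : ∀ y, RightExt v y → y.length ≤ k)
    (hext : ∀ y, RightExt v y → ∃ z, RightExt v z ∧ z.length = k ∧ y <:+ z) {y : List β} :
    SuperMax v y ↔ RightExt v y ∧ y.length = k := by
  constructor
  · rintro ⟨hy, hmax⟩
    obtain ⟨z, hz, hzk, hyz⟩ := hext y hy
    exact ⟨hy, hmax z hz hyz ▸ hzk⟩
  · rintro ⟨hy, hyk⟩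
    exact ⟨hy, fun z hz hyz =>
      (hyz.eq_of_length (le_antisymm hyz.length_le (hyk ▸ hle z hz))).symm⟩

def IsLinearDeBruijn (k : ℕ) (w : List α) : Prop :=
  ∀ x : List α, x.length = k → ∃! i, x <+: w.drop i

namespace IsLinearDeBruijn

variable {k : ℕ} {w : List α}

theorem pos (hw : IsLinearDeBruijn k w) : 0 < k := by
  by_contra! hk
  obtain ⟨i, -, huniq⟩ := hw [] (by rw [length_nil]; omega)
  have h₀ := huniq 0 nil_prefix
  have h₁ := huniq 1 nil_prefix
  omega

theorem le_length [Nonempty α] (hw : IsLinearDeBruijn k w) : k ≤ w.length := by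
  obtain ⟨a⟩ := ‹Nonempty α›
  obtain ⟨i, hi, -⟩ := hw (replicate k a) length_replicate
  simpa using hi.length_le.trans (drop_suffix i w).length_le

theorem infix_of_length_le (hw : IsLinearDeBruijn k w) {x : List α} (hx : x.length ≤ k) :
    x <:+: w := by
  rcases x with _ | ⟨a, t⟩
  · exact nil_infix
  · obtain ⟨i, hi, -⟩ := hw (a :: t ++ replicate (k - (a :: t).length) a)
      (by rw [length_append, length_replicate]; omega)
    exact infix_iff_exists_prefix_drop.mpr ⟨i, (prefix_append _ _).trans hi⟩

theorem eq_of_prefix_drop (hw : IsLinearDeBruijn k w) {x : List α} (hx : k ≤ x.length)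
    {i j : ℕ} (hi : x <+: w.drop i) (hj : x <+: w.drop j) : i = j :=
  (hw (x.take k) (by simpa using hx)).unique ((take_prefix k x).trans hi)
    ((take_prefix k x).trans hj)

theorem eq_of_append_singleton_infix (hw : IsLinearDeBruijn k w) {x : List α}
    (hx : k ≤ x.length) {a b : α} (ha : x ++ [a] <:+: w) (hb : x ++ [b] <:+: w) : a = b := by
  obtain ⟨i, hi⟩ := infix_iff_exists_prefix_drop.mp ha
  obtain ⟨j, hj⟩ := infix_iff_exists_prefix_drop.mp hb
  obtain rfl := hw.eq_of_prefix_drop hx ((prefix_append _ _).trans hi)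
    ((prefix_append _ _).trans hj)
  simpa using (prefix_of_prefix_length_le hi hj (by simp)).eq_of_length (by simp)

theorem not_append_singleton_infix_of_suffix (hw : IsLinearDeBruijn k w) {x : List α}
    (hx : k ≤ x.length) (hxw : x <:+ w) (b : α) : ¬ x ++ [b] <:+: w := by
  intro hb
  obtain ⟨j, hj⟩ := infix_iff_exists_prefix_drop.mp hb
  have hlast : x <+: w.drop (w.length - x.length) := (suffix_iff_eq_drop.mp hxw ▸ prefix_rfl)
  obtain rfl := hw.eq_of_prefix_drop hx hlast ((prefix_append _ _).trans hj)
  have := hj.length_le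
  simp only [length_append, length_singleton, length_drop] at this
  omega

theorem length_lt_of_rightMaximal (hw : IsLinearDeBruijn k w) {x : List (WithBot α)}
    {a b : WithBot α} (hab : a ≠ b) (ha : x ++ [a] <:+: term w) (hb : x ++ [b] <:+: term w) :
    x.length < k := by
  by_contra! hkx
  have hmap : Function.Injective (map (WithBot.some : α → WithBot α)) :=
    map_injective_iff.mpr WithBot.coe_injective
  rcases append_singleton_infix_term_iff.mp ha with ⟨x₁, a', ha', rfl, rfl⟩ | ⟨⟨s, hs, rfl⟩, rfl⟩
    <;> rcases append_singleton_infix_term_iff.mp hb with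
      ⟨x₂, b', hb', hx, rfl⟩ | ⟨⟨s', hs', hx⟩, rfl⟩
  · obtain rfl := hmap hx
    exact hab (congrArg _ (hw.eq_of_append_singleton_infix (by simpa using hkx) ha' hb'))
  · obtain rfl := hmap hx
    exact hw.not_append_singleton_infix_of_suffix (by simpa using hkx) hs' a' ha'
  · obtain rfl := hmap hx
    exact hw.not_append_singleton_infix_of_suffix (by simpa using hkx) hs b' hb'
  · exact hab rfl

theorem rightExt_term_iff [Nontrivial α] (hw : IsLinearDeBruijn k w) {y : List (WithBot α)} :
    RightExt (term w) y ↔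
      (∃ (x : List α) (a : α), x.length < k ∧ y = (x ++ [a]).map WithBot.some) ∨
      ∃ s, s <:+ w ∧ s.length < k ∧ y = s.map WithBot.some ++ [⊥] := by
  constructor
  · rintro ⟨x, a, b, rfl, hab, ha, hb⟩
    have hxk := hw.length_lt_of_rightMaximal hab ha hb
    rcases append_singleton_infix_term_iff.mp ha with ⟨x', a', -, rfl, rfl⟩ | ⟨⟨s, hs, rfl⟩, rfl⟩
    · exact Or.inl ⟨x', a', by simpa using hxk, by simp⟩
    · exact Or.inr ⟨s, hs, by simpa using hxk, rfl⟩
  · rintro (⟨x, a, hxk, rfl⟩ | ⟨s, hs, hsk, rfl⟩)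
    · obtain ⟨b, hab⟩ := exists_ne a
      refine ⟨x.map WithBot.some, a, b, by simp, by simpa using hab.symm, ?_, ?_⟩
      all_goals exact append_singleton_infix_term_iff.mpr (Or.inl ⟨x, _, hw.infix_of_length_le
        (by simpa using hxk), rfl, rfl⟩)
    · obtain ⟨a⟩ := (inferInstance : Nonempty α)
      refine ⟨s.map WithBot.some, ⊥, a, rfl, WithBot.bot_ne_coe, ?_, ?_⟩
      · exact append_singleton_infix_term_iff.mpr (Or.inr ⟨⟨s, hs, rfl⟩, rfl⟩)
      · exact append_singleton_infix_term_iff.mpr (Or.inl ⟨s, a, hw.infix_of_length_le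
          (by simpa using hsk), rfl, rfl⟩)

theorem length_le_of_rightExt_term [Nontrivial α] (hw : IsLinearDeBruijn k w)
    {y : List (WithBot α)} (hy : RightExt (term w) y) : y.length ≤ k := by
  rcases hw.rightExt_term_iff.mp hy with ⟨x, a, hxk, rfl⟩ | ⟨s, -, hsk, rfl⟩ <;>
  · simp only [length_map, length_append, length_singleton]
    omega

theorem exists_rightExt_term_suffix [Nontrivial α] (hw : IsLinearDeBruijn k w)
    {y : List (WithBot α)} (hy : RightExt (term w) y) :
    ∃ z, RightExt (term w) z ∧ z.length = k ∧ y <:+ z := by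
  rcases hw.rightExt_term_iff.mp hy with ⟨x, a, hxk, rfl⟩ | ⟨s, hs, hsk, rfl⟩
  · refine ⟨(replicate (k - 1 - x.length) a ++ x ++ [a]).map WithBot.some,
      hw.rightExt_term_iff.mpr (Or.inl ⟨_, a, ?_, rfl⟩), ?_, ?_⟩
    · simp only [length_append, length_replicate]
      omega
    · simp only [length_map, length_append, length_replicate, length_singleton]
      omega
    · exact (suffix_append_self_iff.mpr (suffix_append _ _)).map _
  · have hwk := hw.le_length
    set p := w.drop (w.length - (k - 1))
    have hp : p.length = k - 1 := by simp only [p, length_drop]; omega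
    refine ⟨p.map WithBot.some ++ [⊥],
      hw.rightExt_term_iff.mpr (Or.inr ⟨p, drop_suffix _ _, by omega, rfl⟩), ?_, ?_⟩
    · simp only [length_append, length_map, hp, length_singleton]
      omega
    · exact suffix_append_self_iff.mpr
        ((suffix_of_suffix_length_le hs (drop_suffix _ _) (by rw [hp]; omega)).map _)

theorem superMax_term_iff [Nontrivial α] (hw : IsLinearDeBruijn k w) {y : List (WithBot α)} :
    SuperMax (term w) y ↔ y = (w.drop (w.length - (k - 1))).map WithBot.some ++ [⊥] ∨
      ∃ x : List α, x.length = k ∧ x.map WithBot.some = y := by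
  have hk := hw.pos
  have hwk := hw.le_length
  rw [superMax_iff_of_rightExt_length_le (fun _ => hw.length_le_of_rightExt_term)
    (fun _ => hw.exists_rightExt_term_suffix), hw.rightExt_term_iff]
  constructor
  · rintro ⟨⟨x, a, -, rfl⟩ | ⟨s, hs, -, rfl⟩, hyk⟩
    · exact Or.inr ⟨x ++ [a], by simpa using hyk, rfl⟩
    · left
      rw [suffix_iff_eq_drop.mp hs]
      simp only [length_append, length_map, length_singleton] at hyk
      rw [← hyk, Nat.add_sub_cancel]
  · rintro (rfl | ⟨x, hxk, rfl⟩)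
    · refine ⟨Or.inr ⟨_, drop_suffix _ _, ?_, rfl⟩, ?_⟩ <;>
      · simp only [length_append, length_map, length_drop, length_singleton]
        omega
    · have hx : x ≠ [] := ne_nil_of_length_pos (by omega)
      rw [← dropLast_concat_getLast hx] at hxk ⊢
      exact ⟨Or.inl ⟨_, _, by simp only [length_append, length_singleton] at hxk; omega, rfl⟩,
        by simpa using hxk⟩

theorem sre_term [Fintype α] [Nontrivial α] (hw : IsLinearDeBruijn k w) :
    sre (term w) = Fintype.card α ^ k + 1 := by
  have hmap : Function.Injective (map (WithBot.some : α → WithBot α)) :=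
    map_injective_iff.mpr WithBot.coe_injective
  have hset : {y | SuperMax (term w) y} =
      insert ((w.drop (w.length - (k - 1))).map WithBot.some ++ [⊥])
        (map WithBot.some '' {x : List α | x.length = k}) := by
    ext y
    simp only [Set.mem_ofPred_eq, hw.superMax_term_iff, Set.mem_insert_iff, Set.mem_image]
  have hbot : (w.drop (w.length - (k - 1))).map WithBot.some ++ [⊥] ∉
      map WithBot.some '' {x : List α | x.length = k} := by
    rintro ⟨x, -, hx⟩
    simpa using congrArg (⊥ ∈ ·) hx
  rw [sre, hset, Set.ncard_insert_of_notMem hbot ((finite_length_eq α k).image _),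
    Set.ncard_image_of_injective _ hmap, ncard_setOf_length_eq]

end IsLinearDeBruijn

theorem take_drop_linz {k i : ℕ} {U : List α} (hk : k ≤ U.length) (hi : i < U.length) :
    ((linz k U).drop i).take k = (U.rotate i).take k := by
  rw [linz, rotate_eq_drop_append_take hi.le, drop_append_of_le_length hi.le, take_append,
    take_append, take_take, take_take, length_drop]
  congr 2
  omega

namespace IsDeBruijn

variable [Fintype α] {k : ℕ} {C : List α}

theorem rotate (hC : IsDeBruijn k C) (c : ℕ) : IsDeBruijn k (C.rotate c) := by
  obtain ⟨hlen, hwin⟩ := hC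
  refine ⟨by rwa [length_rotate], fun x hx => ?_⟩
  set n := C.length
  have hrot : ∀ i, (C.rotate c).rotate i = C.rotate ((c + i) % n) := fun i => by
    rw [rotate_rotate, rotate_mod]
  obtain ⟨j, ⟨hj, hxj⟩, huniq⟩ := hwin x hx
  have hn : 0 < n := by omega
  set i₀ := (n - c % n + j) % n
  have hi₀ : (c + i₀) % n = j := by
    have := Nat.div_add_mod c n
    have := Nat.mod_lt c hn
    rw [Nat.add_mod_mod, show c + (n - c % n + j) = j + n * (c / n + 1) by
      rw [Nat.mul_add_one]; omega, Nat.add_mul_mod_self_left, Nat.mod_eq_of_lt hj]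
  rw [length_rotate]
  refine ⟨i₀, ⟨Nat.mod_lt _ hn, by rw [hrot, hi₀]; exact hxj⟩, ?_⟩
  rintro i ⟨hi, hxi⟩
  have hci : (c + i) % n = j := huniq _ ⟨Nat.mod_lt _ hn, by rw [← hrot]; exact hxi⟩
  exact Nat.ModEq.eq_of_lt_of_lt (Nat.ModEq.add_left_cancel' c (hci.trans hi₀.symm)) hi
    (Nat.mod_lt _ hn)

theorem isLinearDeBruijn_linz [Nontrivial α] (hC : IsDeBruijn k C) (hk : 0 < k) :
    IsLinearDeBruijn k (linz k C) := by
  obtain ⟨hlen, hwin⟩ := hC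
  have hkC : k ≤ C.length := hlen ▸ (Nat.lt_two_pow_self.trans_le
    (Nat.pow_le_pow_left Fintype.one_lt_card k)).le
  intro x hx
  refine (existsUnique_congr fun i => ?_).mpr (hwin x hx)
  rw [prefix_iff_eq_take, hx]
  by_cases hi : i < C.length
  · rw [take_drop_linz hkC hi, and_iff_right hi]
  · simp only [hi, false_and, iff_false]
    intro h
    have := congrArg length h
    simp only [linz, length_take, length_drop, length_append] at this
    omega

end IsDeBruijn

/-- for the linearization `w_lin` of (a rotation of) any binary
de Bruijn sequence of order k ≥ 2, the size χ of a smallest suffixient set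
of the terminated string `w_lin $` is `2^k + 1`. -/
theorem binary_deBruijn_chi (k : ℕ) (hk : 2 ≤ k)
    (C : List (Fin 2)) (hC : IsDeBruijn k C) (c : ℕ) :
    chi (linz k (C.rotate c)) = 2 ^ k + 1 := by
  have hw := (hC.rotate c).isLinearDeBruijn_linz (by omega)
  have hsre := hw.sre_term
  rwa [Fintype.card_fin] at hsre
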